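/- Boundary estimate for weighted mean-zero primitives: If f : [-1,1] → ℝ is continuous with ∫_{-1}^{1} h_s(σ) f(σ) dσ = 0, then there is a constant C (independent of f) such that for every ξ ∈ [-1,1], |∫_{-1}^{ξ} h_s(σ) f(σ) dσ| ≤ C h_s(ξ) ‖h_s^{1/2} f‖_{L²(-1,1)}. -/
import Mathlib

noncomputable def hs : ℝ → ℝ := fun x =>
  (Real.exp 1 ^ 2 + 1) / (Real.exp 1 ^ 2 - 1) -
    (Real.exp (x + 1) + Real.exp (1 - x)) / (Real.exp 1 ^ 2 - 1)

open Real

private lemma hs_alg (E y : ℝ) (hE : 1 < E) (hy : 0 < y) :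
    (E ^ 2 + 1) / (E ^ 2 - 1) - (y * E + E / y) / (E ^ 2 - 1) =
      ((E + 1 / E) / 2 - (y + 1 / y) / 2) / ((E - 1 / E) / 2) := by
  have h2 : E ^ 2 - 1 ≠ 0 := by nlinarith
  have h3 : E - 1 / E ≠ 0 := by
    have : 0 < E - 1 / E := by
      rw [sub_pos, div_lt_iff₀ (by linarith)]; nlinarith
    linarith
  have hE0 : E ≠ 0 := by linarith
  have hy0 : y ≠ 0 := hy.ne'
  rw [eq_div_iff (by intro h; exact h3 (by linarith))]
  field_simp

lemma hs_eq (x : ℝ) : hs x = (Real.cosh 1 - Real.cosh x) / Real.sinh 1 := by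
  have h1 : (1:ℝ) < Real.exp 1 := by
    have := Real.add_one_le_exp (1:ℝ); linarith
  have e1 : Real.exp (x + 1) = Real.exp x * Real.exp 1 := Real.exp_add x 1
  have e2 : Real.exp (1 - x) = Real.exp 1 / Real.exp x := Real.exp_sub 1 x
  have e3 : Real.exp (-1 : ℝ) = 1 / Real.exp 1 := by rw [Real.exp_neg, one_div]
  have e4 : Real.exp (-x) = 1 / Real.exp x := by rw [Real.exp_neg, one_div]
  unfold hs
  rw [e1, e2, Real.sinh_eq, Real.cosh_eq, Real.cosh_eq, e3, e4]
  exact hs_alg _ _ h1 (Real.exp_pos x)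

lemma sinh_one_pos : (0:ℝ) < Real.sinh 1 := Real.sinh_pos_iff.2 one_pos

lemma hs_even (x : ℝ) : hs (-x) = hs x := by rw [hs_eq, hs_eq, Real.cosh_neg]

lemma cosh_sub_bound_upper : ∀ x ∈ Set.Icc (0:ℝ) 1,
    Real.cosh 1 - Real.cosh x ≤ Real.sinh 1 * (1 - x) := by
  have hanti : AntitoneOn (fun x => Real.cosh x - Real.sinh 1 * x) (Set.Icc 0 1) := by
    apply antitoneOn_of_deriv_nonpos (convex_Icc 0 1)
    · exact (Real.continuous_cosh.sub (continuous_const.mul continuous_id)).continuousOn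
    · intro x hx
      exact ((Real.differentiable_cosh x).sub ((differentiable_id x).const_mul _)).differentiableWithinAt
    · intro x hx
      rw [interior_Icc] at hx
      have : HasDerivAt (fun x => Real.cosh x - Real.sinh 1 * x) (Real.sinh x - Real.sinh 1 * 1) x :=
        (Real.hasDerivAt_cosh x).sub ((hasDerivAt_id x).const_mul _)
      rw [this.deriv]
      have : Real.sinh x ≤ Real.sinh 1 := Real.sinh_le_sinh.2 (le_of_lt hx.2)
      linarith
  intro x hx
  have := hanti hx (Set.right_mem_Icc.2 zero_le_one) hx.2
  simp only at this
  linarith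

lemma cosh_sub_bound_lower : ∀ x ∈ Set.Icc ((1:ℝ)/2) 1,
    Real.sinh (1/2) * (1 - x) ≤ Real.cosh 1 - Real.cosh x := by
  have hmono : MonotoneOn (fun x => Real.cosh x - Real.sinh (1/2) * x) (Set.Icc ((1:ℝ)/2) 1) := by
    apply monotoneOn_of_deriv_nonneg (convex_Icc _ _)
    · exact (Real.continuous_cosh.sub (continuous_const.mul continuous_id)).continuousOn
    · intro x hx
      exact ((Real.differentiable_cosh x).sub ((differentiable_id x).const_mul _)).differentiableWithinAt
    · intro x hx
      rw [interior_Icc] at hx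
      have : HasDerivAt (fun x => Real.cosh x - Real.sinh (1/2) * x) (Real.sinh x - Real.sinh (1/2) * 1) x :=
        (Real.hasDerivAt_cosh x).sub ((hasDerivAt_id x).const_mul _)
      rw [this.deriv]
      have : Real.sinh (1/2) ≤ Real.sinh x := Real.sinh_le_sinh.2 (le_of_lt hx.1)
      linarith
  intro x hx
  have := hmono hx (Set.right_mem_Icc.2 (by norm_num)) hx.2
  simp only at this
  linarith

noncomputable def hsc : ℝ := min (Real.cosh 1 - Real.cosh (1/2)) (Real.sinh (1/2) / 2) / Real.sinh 1

lemma hsc_pos : 0 < hsc := by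
  have h1 : Real.cosh (1/2) < Real.cosh 1 := by
    rw [Real.cosh_lt_cosh]; rw [abs_of_nonneg, abs_of_nonneg] <;> norm_num
  have h2 : 0 < Real.sinh (1/2) := Real.sinh_pos_iff.2 (by norm_num)
  exact div_pos (lt_min (by linarith) (by linarith)) sinh_one_pos

lemma hs_le : ∀ x ∈ Set.Icc (-1:ℝ) 1, hs x ≤ 1 - x ^ 2 := by
  have key : ∀ y ∈ Set.Icc (0:ℝ) 1, hs y ≤ 1 - y ^ 2 := by
    intro y hy
    rw [hs_eq, div_le_iff₀ sinh_one_pos]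
    have h1 := cosh_sub_bound_upper y hy
    have h2 : y ^ 2 ≤ y := by nlinarith [hy.1, hy.2]
    nlinarith [sinh_one_pos]
  intro x hx
  rcases le_total 0 x with h | h
  · exact key x ⟨h, hx.2⟩
  · have := key (-x) ⟨by linarith [hx.1], by linarith [hx.1]⟩
    rw [hs_even] at this
    calc hs x ≤ 1 - (-x) ^ 2 := this
    _ = 1 - x ^ 2 := by ring

lemma hs_ge : ∀ x ∈ Set.Icc (-1:ℝ) 1, hsc * (1 - x ^ 2) ≤ hs x := by
  have hsp := sinh_one_pos
  have key : ∀ y ∈ Set.Icc (0:ℝ) 1, hsc * (1 - y ^ 2) ≤ hs y := by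
    intro y hy
    rw [hs_eq, le_div_iff₀ sinh_one_pos]
    have hcm : hsc * Real.sinh 1 = min (Real.cosh 1 - Real.cosh (1/2)) (Real.sinh (1/2) / 2) := by
      unfold hsc; field_simp
    rcases le_total y (1/2) with h | h
    · have h1 : Real.cosh y ≤ Real.cosh (1/2) := by
        rw [Real.cosh_le_cosh, abs_of_nonneg hy.1, abs_of_nonneg (by norm_num : (0:ℝ) ≤ 1/2)]
        exact h
      have h2 : min (Real.cosh 1 - Real.cosh (1/2)) (Real.sinh (1/2) / 2) ≤ Real.cosh 1 - Real.cosh (1/2) := min_le_left _ _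
      have h3 : (0:ℝ) < hsc := hsc_pos
      have h4 : 1 - y ^ 2 ≤ 1 := by nlinarith [hy.1]
      have hp : 0 ≤ hsc * Real.sinh 1 := mul_nonneg h3.le hsp.le
      calc hsc * (1 - y ^ 2) * Real.sinh 1 ≤ hsc * 1 * Real.sinh 1 := by nlinarith [mul_le_mul_of_nonneg_right h4 hp]
      _ = hsc * Real.sinh 1 := by ring
      _ ≤ Real.cosh 1 - Real.cosh (1/2) := by rw [hcm]; exact h2
      _ ≤ Real.cosh 1 - Real.cosh y := by linarith
    · have h1 := cosh_sub_bound_lower y ⟨h, hy.2⟩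
      have h2 : min (Real.cosh 1 - Real.cosh (1/2)) (Real.sinh (1/2) / 2) ≤ Real.sinh (1/2) / 2 := min_le_right _ _
      have h3 : (0:ℝ) < hsc := hsc_pos
      have h5 : hsc * Real.sinh 1 ≤ Real.sinh (1/2) / 2 := by rw [hcm]; exact h2
      have h6 : 1 - y ^ 2 ≤ 2 * (1 - y) := by nlinarith [hy.2]
      have h7 : 0 ≤ 1 - y := by linarith [hy.2]
      have hp : 0 ≤ hsc * Real.sinh 1 := mul_nonneg h3.le hsp.le
      calc hsc * (1 - y ^ 2) * Real.sinh 1 ≤ hsc * (2 * (1 - y)) * Real.sinh 1 := by nlinarith [mul_le_mul_of_nonneg_right h6 hp]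
      _ = (hsc * Real.sinh 1) * (2 * (1 - y)) := by ring
      _ ≤ (Real.sinh (1/2) / 2) * (2 * (1 - y)) := by nlinarith [mul_le_mul_of_nonneg_right h5 (by linarith : (0:ℝ) ≤ 2 * (1 - y))]
      _ = Real.sinh (1/2) * (1 - y) := by ring
      _ ≤ Real.cosh 1 - Real.cosh y := h1
  intro x hx
  rcases le_total 0 x with h | h
  · exact key x ⟨h, hx.2⟩
  · have := key (-x) ⟨by linarith [hx.1], by linarith [hx.1]⟩
    rw [hs_even] at this
    calc hsc * (1 - x ^ 2) = hsc * (1 - (-x) ^ 2) := by ring_nf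
    _ ≤ hs x := this

lemma hs_nonneg : ∀ x ∈ Set.Icc (-1:ℝ) 1, 0 ≤ hs x := by
  intro x hx
  have h1 := hs_ge x hx
  have : 0 ≤ 1 - x ^ 2 := by nlinarith [hx.1, hx.2]
  nlinarith [hsc_pos]

lemma hs_cont : Continuous hs := by
  unfold hs
  fun_prop

open intervalIntegral MeasureTheory in
lemma cs_int {a b : ℝ} (hab : a ≤ b) {g h : ℝ → ℝ}
    (hg : ContinuousOn g (Set.Icc a b)) (hh : ContinuousOn h (Set.Icc a b)) :
    (∫ x in a..b, g x * h x) ^ 2 ≤ (∫ x in a..b, g x ^ 2) * (∫ x in a..b, h x ^ 2) := by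
  have huIcc : Set.uIcc a b = Set.Icc a b := Set.uIcc_of_le hab
  have hgi : IntervalIntegrable (fun x => g x ^ 2) volume a b :=
    (hg.pow 2).intervalIntegrable_of_Icc hab
  have hhi : IntervalIntegrable (fun x => h x ^ 2) volume a b :=
    (hh.pow 2).intervalIntegrable_of_Icc hab
  have hghi : IntervalIntegrable (fun x => g x * h x) volume a b :=
    (hg.mul hh).intervalIntegrable_of_Icc hab
  set A := ∫ x in a..b, g x ^ 2 with hA
  set B := ∫ x in a..b, g x * h x with hB
  set C := ∫ x in a..b, h x ^ 2 with hC
  have key : ∀ t : ℝ, 0 ≤ A * (t * t) + (2 * B) * t + C := by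
    intro t
    have h0 : 0 ≤ ∫ x in a..b, (t * g x + h x) ^ 2 :=
      intervalIntegral.integral_nonneg hab (fun u _ => sq_nonneg _)
    have hexp : (fun x => (t * g x + h x) ^ 2) =
        fun x => t ^ 2 * g x ^ 2 + ((2 * t) * (g x * h x) + h x ^ 2) := by
      funext x; ring
    rw [hexp] at h0
    rw [intervalIntegral.integral_add (hgi.const_mul _) ((hghi.const_mul _).add hhi),
      intervalIntegral.integral_add (hghi.const_mul _) hhi,
      intervalIntegral.integral_const_mul, intervalIntegral.integral_const_mul] at h0
    nlinarith [h0]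
  have hd := discrim_le_zero key
  rw [discrim] at hd
  nlinarith [hd]

open MeasureTheory in
theorem stmt_12 :
    ∃ C > (0 : ℝ), ∀ f : ℝ → ℝ, ContinuousOn f (Set.Icc (-1 : ℝ) 1) →
      (∫ σ in (-1 : ℝ)..1, hs σ * f σ) = 0 →
      ∀ ξ ∈ Set.Icc (-1 : ℝ) 1,
        |∫ σ in (-1 : ℝ)..ξ, hs σ * f σ| ≤
          C * hs ξ * Real.sqrt (∫ σ in (-1 : ℝ)..1, hs σ * (f σ) ^ 2) := by
  have hscp := hsc_pos
  refine ⟨1 / hsc, by positivity, ?_⟩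
  intro f hf hzero ξ hξ
  have hfc : ContinuousOn (fun σ => hs σ * f σ) (Set.Icc (-1:ℝ) 1) :=
    hs_cont.continuousOn.mul hf
  have hf2c : ContinuousOn (fun σ => hs σ * f σ ^ 2) (Set.Icc (-1:ℝ) 1) :=
    hs_cont.continuousOn.mul (hf.pow 2)
  have hintg : ∀ {g : ℝ → ℝ} {a b : ℝ}, ContinuousOn g (Set.Icc (-1:ℝ) 1) →
      -1 ≤ a → a ≤ b → b ≤ 1 → IntervalIntegrable g volume a b := by
    intro g a b hg ha hab hb
    exact (hg.mono (Set.Icc_subset_Icc ha hb)).intervalIntegrable_of_Icc hab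
  set I := ∫ σ in (-1:ℝ)..1, hs σ * (f σ) ^ 2 with hI
  have hI0 : 0 ≤ I :=
    intervalIntegral.integral_nonneg (by norm_num)
      (fun u hu => mul_nonneg (hs_nonneg u hu) (sq_nonneg _))
  have hsqI : 0 ≤ Real.sqrt I := Real.sqrt_nonneg _
  -- Cauchy-Schwarz on subintervals
  have hCS : ∀ a b : ℝ, -1 ≤ a → a ≤ b → b ≤ 1 →
      (∫ x in a..b, hs x * f x) ^ 2 ≤ (∫ x in a..b, hs x) * (∫ x in a..b, hs x * f x ^ 2) := by
    intro a b ha hab hb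
    have hsub : Set.Icc a b ⊆ Set.Icc (-1:ℝ) 1 := Set.Icc_subset_Icc ha hb
    have hg : ContinuousOn (fun x => Real.sqrt (hs x)) (Set.Icc a b) :=
      (Real.continuous_sqrt.comp hs_cont).continuousOn
    have hh : ContinuousOn (fun x => Real.sqrt (hs x) * f x) (Set.Icc a b) :=
      hg.mul (hf.mono hsub)
    have hcs := cs_int hab hg hh
    have huIcc : Set.uIcc a b = Set.Icc a b := Set.uIcc_of_le hab
    have e1 : (∫ x in a..b, Real.sqrt (hs x) * (Real.sqrt (hs x) * f x)) =
        ∫ x in a..b, hs x * f x := by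
      apply intervalIntegral.integral_congr
      intro x hx
      rw [huIcc] at hx
      dsimp only
      rw [← mul_assoc, Real.mul_self_sqrt (hs_nonneg x (hsub hx))]
    have e2 : (∫ x in a..b, Real.sqrt (hs x) ^ 2) = ∫ x in a..b, hs x := by
      apply intervalIntegral.integral_congr
      intro x hx
      rw [huIcc] at hx
      dsimp only
      exact Real.sq_sqrt (hs_nonneg x (hsub hx))
    have e3 : (∫ x in a..b, (Real.sqrt (hs x) * f x) ^ 2) = ∫ x in a..b, hs x * f x ^ 2 := by
      apply intervalIntegral.integral_congr
      intro x hx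
      rw [huIcc] at hx
      dsimp only
      rw [mul_pow, Real.sq_sqrt (hs_nonneg x (hsub hx))]
    rw [e1, e2, e3] at hcs
    exact hcs
  have hpint : ∀ a b : ℝ, (∫ x in a..b, (1 - x ^ 2)) = (b - b ^ 3 / 3) - (a - a ^ 3 / 3) := by
    intro a b
    rw [intervalIntegral.integral_sub intervalIntegrable_const
      ((continuous_pow 2).intervalIntegrable _ _), integral_pow, integral_one]
    push_cast
    ring
  rcases le_total ξ 0 with hξ0 | hξ0
  · -- left case
    have hA : (∫ x in (-1:ℝ)..ξ, hs x) ≤ (1 + ξ) ^ 2 := by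
      have h1 : (∫ x in (-1:ℝ)..ξ, hs x) ≤ ∫ x in (-1:ℝ)..ξ, (1 - x ^ 2) :=
        intervalIntegral.integral_mono_on hξ.1 (hintg hs_cont.continuousOn le_rfl hξ.1 hξ.2)
          ((continuous_const.sub (continuous_pow 2)).intervalIntegrable _ _)
          (fun x hx => hs_le x ⟨hx.1, le_trans hx.2 hξ.2⟩)
      have h2 := hpint (-1) ξ
      nlinarith [pow_nonneg (by linarith [hξ.1] : (0:ℝ) ≤ 1 + ξ) 3]
    have hBpos : 0 ≤ ∫ x in (-1:ℝ)..ξ, hs x * f x ^ 2 :=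
      intervalIntegral.integral_nonneg hξ.1
        (fun u hu => mul_nonneg (hs_nonneg u ⟨hu.1, hu.2.trans hξ.2⟩) (sq_nonneg _))
    have hCpos : 0 ≤ ∫ x in ξ..1, hs x * f x ^ 2 :=
      intervalIntegral.integral_nonneg hξ.2
        (fun u hu => mul_nonneg (hs_nonneg u ⟨hξ.1.trans hu.1, hu.2⟩) (sq_nonneg _))
    have hsplit : (∫ x in (-1:ℝ)..ξ, hs x * f x ^ 2) + (∫ x in ξ..1, hs x * f x ^ 2) = I :=
      intervalIntegral.integral_add_adjacent_intervals
        (hintg hf2c le_rfl hξ.1 hξ.2) (hintg hf2c hξ.1 hξ.2 le_rfl)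
    have hB : (∫ x in (-1:ℝ)..ξ, hs x * f x ^ 2) ≤ I := by linarith
    have h2 : (∫ x in (-1:ℝ)..ξ, hs x * f x) ^ 2 ≤ (1 + ξ) ^ 2 * I :=
      le_trans (hCS (-1) ξ le_rfl hξ.1 hξ.2) (mul_le_mul hA hB hBpos (sq_nonneg _))
    have h1ξ : (0:ℝ) ≤ 1 + ξ := by linarith [hξ.1]
    have h3 : |∫ x in (-1:ℝ)..ξ, hs x * f x| ≤ (1 + ξ) * Real.sqrt I := by
      rw [← Real.sqrt_sq_eq_abs]
      calc Real.sqrt ((∫ x in (-1:ℝ)..ξ, hs x * f x) ^ 2) ≤ Real.sqrt ((1 + ξ) ^ 2 * I) :=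
        Real.sqrt_le_sqrt h2
      _ = (1 + ξ) * Real.sqrt I := by rw [Real.sqrt_mul (sq_nonneg _), Real.sqrt_sq h1ξ]
    have h4 : hsc * (1 + ξ) ≤ hs ξ := by
      have := hs_ge ξ hξ
      nlinarith [mul_nonneg (mul_nonneg hscp.le h1ξ) (by linarith : (0:ℝ) ≤ -ξ)]
    have h5 : (1 + ξ) ≤ 1 / hsc * hs ξ := by
      rw [one_div, inv_mul_eq_div, le_div_iff₀ hscp]
      nlinarith [h4]
    calc |∫ x in (-1:ℝ)..ξ, hs x * f x| ≤ (1 + ξ) * Real.sqrt I := h3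
    _ ≤ (1 / hsc * hs ξ) * Real.sqrt I := mul_le_mul_of_nonneg_right h5 hsqI
    _ = 1 / hsc * hs ξ * Real.sqrt I := by ring
  · -- right case
    have hflip : (∫ x in (-1:ℝ)..ξ, hs x * f x) = -(∫ x in ξ..1, hs x * f x) := by
      have hadd := intervalIntegral.integral_add_adjacent_intervals
        (hintg hfc le_rfl hξ.1 hξ.2) (hintg hfc hξ.1 hξ.2 le_rfl)
      rw [hzero] at hadd
      linarith
    rw [hflip, abs_neg]
    have hA : (∫ x in ξ..1, hs x) ≤ (1 - ξ) ^ 2 := by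
      have h1 : (∫ x in ξ..1, hs x) ≤ ∫ x in ξ..1, (1 - x ^ 2) :=
        intervalIntegral.integral_mono_on hξ.2 (hintg hs_cont.continuousOn hξ.1 hξ.2 le_rfl)
          ((continuous_const.sub (continuous_pow 2)).intervalIntegrable _ _)
          (fun x hx => hs_le x ⟨hξ.1.trans hx.1, hx.2⟩)
      have h2 := hpint ξ 1
      nlinarith [pow_nonneg (by linarith [hξ.2] : (0:ℝ) ≤ 1 - ξ) 3]
    have hBpos : 0 ≤ ∫ x in ξ..1, hs x * f x ^ 2 :=
      intervalIntegral.integral_nonneg hξ.2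
        (fun u hu => mul_nonneg (hs_nonneg u ⟨hξ.1.trans hu.1, hu.2⟩) (sq_nonneg _))
    have hCpos : 0 ≤ ∫ x in (-1:ℝ)..ξ, hs x * f x ^ 2 :=
      intervalIntegral.integral_nonneg hξ.1
        (fun u hu => mul_nonneg (hs_nonneg u ⟨hu.1, hu.2.trans hξ.2⟩) (sq_nonneg _))
    have hsplit : (∫ x in (-1:ℝ)..ξ, hs x * f x ^ 2) + (∫ x in ξ..1, hs x * f x ^ 2) = I :=
      intervalIntegral.integral_add_adjacent_intervals
        (hintg hf2c le_rfl hξ.1 hξ.2) (hintg hf2c hξ.1 hξ.2 le_rfl)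
    have hB : (∫ x in ξ..1, hs x * f x ^ 2) ≤ I := by linarith
    have h2 : (∫ x in ξ..1, hs x * f x) ^ 2 ≤ (1 - ξ) ^ 2 * I :=
      le_trans (hCS ξ 1 hξ.1 hξ.2 le_rfl) (mul_le_mul hA hB hBpos (sq_nonneg _))
    have h1ξ : (0:ℝ) ≤ 1 - ξ := by linarith [hξ.2]
    have h3 : |∫ x in ξ..1, hs x * f x| ≤ (1 - ξ) * Real.sqrt I := by
      rw [← Real.sqrt_sq_eq_abs]
      calc Real.sqrt ((∫ x in ξ..1, hs x * f x) ^ 2) ≤ Real.sqrt ((1 - ξ) ^ 2 * I) :=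
        Real.sqrt_le_sqrt h2
      _ = (1 - ξ) * Real.sqrt I := by rw [Real.sqrt_mul (sq_nonneg _), Real.sqrt_sq h1ξ]
    have h4 : hsc * (1 - ξ) ≤ hs ξ := by
      have := hs_ge ξ hξ
      nlinarith [mul_nonneg (mul_nonneg hscp.le h1ξ) (by linarith : (0:ℝ) ≤ ξ)]
    have h5 : (1 - ξ) ≤ 1 / hsc * hs ξ := by
      rw [one_div, inv_mul_eq_div, le_div_iff₀ hscp]
      nlinarith [h4]
    calc |∫ x in ξ..1, hs x * f x| ≤ (1 - ξ) * Real.sqrt I := h3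
    _ ≤ (1 / hsc * hs ξ) * Real.sqrt I := mul_le_mul_of_nonneg_right h5 hsqI
    _ = 1 / hsc * hs ξ * Real.sqrt I := by ring
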